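/- Let G be a finite graph with symmetric edge weights and Ω a finite subset of vertices with at least two boundary vertices and Ω̃ connected. Then the first nontrivial eigenvalue of the Dirichlet-to-Neumann operator satisfies λ_1(Ω) ≤ 2 h_E(Ω̃). -/

import Mathlib

open scoped Classical
open Finset

variable {V : Type*} [Fintype V]

/-- The vertex boundary δΩ of a finite set Ω of vertices. -/
noncomputable def bdry (μ : V → V → ℝ) (Ω : Finset V) : Finset V :=
  Finset.univ.filter fun x => x ∉ Ω ∧ ∃ y ∈ Ω, 0 < μ x y

/-- Ω̄ = Ω ∪ δΩ. -/
noncomputable def clos (μ : V → V → ℝ) (Ω : Finset V) : Finset V :=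
  Ω ∪ bdry μ Ω

/-- The vertex measure m on Ω̄. -/
noncomputable def vm (μ : V → V → ℝ) (Ω : Finset V) (x : V) : ℝ :=
  if x ∈ Ω then ∑ y, μ x y else ∑ y ∈ Ω, μ x y

/-- m(B) = Σ_{x ∈ B} m_x. -/
noncomputable def msum (μ : V → V → ℝ) (Ω : Finset V) (B : Finset V) : ℝ :=
  ∑ x ∈ B, vm μ Ω x

/-- Sum over the edges e = {x,y} of E(Ω,Ω̄) of μ_{xy} · F x y (for symmetric F). -/
noncomputable def edgeSum (μ : V → V → ℝ) (Ω : Finset V) (F : V → V → ℝ) : ℝ :=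
  (∑ x ∈ Ω, ∑ y ∈ Ω, μ x y * F x y) / 2 +
    ∑ x ∈ Ω, ∑ y ∈ bdry μ Ω, μ x y * F x y

/-- Dirichlet energy D_Ω(f). -/
noncomputable def dirichlet (μ : V → V → ℝ) (Ω : Finset V) (f : V → ℝ) : ℝ :=
  edgeSum μ Ω fun x y => (f x - f y) ^ 2

/-- Dirichlet form D_Ω(f,g). -/
noncomputable def dform (μ : V → V → ℝ) (Ω : Finset V) (f g : V → ℝ) : ℝ :=
  edgeSum μ Ω fun x y => (f x - f y) * (g x - g y)

/-- μ(∂_Ω A): total weight of the edges of E(Ω,Ω̄) with exactly one endpoint in A. -/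
noncomputable def cut (μ : V → V → ℝ) (Ω : Finset V) (A : Finset V) : ℝ :=
  edgeSum μ Ω fun x y => if (x ∈ A) ↔ (y ∈ A) then 0 else 1

/-- The graph Laplacian Δf(x) (used for x ∈ Ω). -/
noncomputable def lap (μ : V → V → ℝ) (Ω : Finset V) (f : V → ℝ) (x : V) : ℝ :=
  (∑ y, μ x y * (f y - f x)) / vm μ Ω x

/-- The outward normal derivative ∂f/∂n(z) (used for z ∈ δΩ). -/
noncomputable def nderiv (μ : V → V → ℝ) (Ω : Finset V) (f : V → ℝ) (z : V) : ℝ :=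
  (∑ x ∈ Ω, μ z x * (f z - f x)) / vm μ Ω z

/-- f is harmonic on Ω. -/
def IsHarmonic (μ : V → V → ℝ) (Ω : Finset V) (u : V → ℝ) : Prop :=
  ∀ x ∈ Ω, lap μ Ω u x = 0

/-- Adjacency in the graph Ω̃ = (Ω̄, E(Ω,Ω̄)). -/
def tilAdj (μ : V → V → ℝ) (Ω : Finset V) (x y : V) : Prop :=
  0 < μ x y ∧ (x ∈ Ω ∨ y ∈ Ω)

/-- The graph Ω̃ is connected. -/
def TilConnected (μ : V → V → ℝ) (Ω : Finset V) : Prop :=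
  ∀ x ∈ clos μ Ω, ∀ y ∈ clos μ Ω, Relation.ReflTransGen (tilAdj μ Ω) x y

/-- λ₁(Ω): the first nontrivial eigenvalue of the Dirichlet-to-Neumann operator,
characterized by its Rayleigh quotient. -/
noncomputable def lambda1 (μ : V → V → ℝ) (Ω : Finset V) : ℝ :=
  sInf { r : ℝ | ∃ u : V → ℝ, IsHarmonic μ Ω u ∧
    (∑ x ∈ bdry μ Ω, u x ^ 2 * vm μ Ω x) = 1 ∧
    (∑ x ∈ bdry μ Ω, u x * vm μ Ω x) = 0 ∧
    r = dirichlet μ Ω u }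

/-- The Escobar-type Cheeger constant h_E(Ω̃). -/
noncomputable def hE (μ : V → V → ℝ) (Ω : Finset V) : ℝ :=
  sInf { r : ℝ | ∃ A : Finset V, A ⊆ clos μ Ω ∧
    0 < msum μ Ω (A ∩ bdry μ Ω) ∧
    msum μ Ω (A ∩ bdry μ Ω) ≤ msum μ Ω (bdry μ Ω) / 2 ∧
    r = cut μ Ω A / msum μ Ω (A ∩ bdry μ Ω) }

/-- The Jammes-type Cheeger constant h_J(Ω̃). -/
noncomputable def hJ (μ : V → V → ℝ) (Ω : Finset V) : ℝ :=
  sInf { r : ℝ | ∃ A : Finset V, A ⊆ clos μ Ω ∧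
    (A ∩ bdry μ Ω).Nonempty ∧
    msum μ Ω A ≤ msum μ Ω (clos μ Ω) / 2 ∧
    r = cut μ Ω A / msum μ Ω (A ∩ bdry μ Ω) }

/-- The classical Cheeger constant h(Ω̃). -/
noncomputable def cheeger (μ : V → V → ℝ) (Ω : Finset V) : ℝ :=
  sInf { r : ℝ | ∃ A : Finset V, A ⊆ clos μ Ω ∧ A.Nonempty ∧
    msum μ Ω A ≤ msum μ Ω (clos μ Ω) / 2 ∧
    r = cut μ Ω A / msum μ Ω A }

/-!
For `A ⊆ Ω̄` with `a = m(A ∩ δΩ) ≤ m(δΩ)/2`, put `c = a / m(δΩ)`. The boundary function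
`φ = 1_A - c` is orthogonal to constants and `∑ φ² m = a (1 - c) ≥ a / 2`. Its harmonic extension
minimises the Dirichlet energy among all extensions of `φ`, so its energy is at most
`D_Ω(1_A - c) = μ(∂_Ω A)`, and the Rayleigh quotient gives `λ₁(Ω) ≤ 2 μ(∂_Ω A) / a`.

Harmonic extensions are found as energy minimisers over a compact box of functions with the
prescribed boundary values; clamping into the box does not increase the energy, so they are global
minimisers, and Green's formula turns the vanishing first variation into harmonicity.
-/

section DirichletEnergy

variable (μ : V → V → ℝ) (Ω : Finset V)

lemma mem_bdry {x : V} : x ∈ bdry μ Ω ↔ x ∉ Ω ∧ ∃ y ∈ Ω, 0 < μ x y := by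
  simp [bdry]

lemma disjoint_bdry : Disjoint Ω (bdry μ Ω) :=
  Finset.disjoint_left.mpr fun _ hx hb => ((mem_bdry μ Ω).mp hb).1 hx

lemma vm_nonneg (hnn : ∀ x y, 0 ≤ μ x y) (x : V) : 0 ≤ vm μ Ω x := by
  unfold vm
  split_ifs <;> exact Finset.sum_nonneg fun y _ => hnn x y

lemma vm_pos_of_mem_bdry (hnn : ∀ x y, 0 ≤ μ x y) {z : V} (hz : z ∈ bdry μ Ω) :
    0 < vm μ Ω z := by
  obtain ⟨hzΩ, y, hy, hzy⟩ := (mem_bdry μ Ω).mp hz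
  rw [vm, if_neg hzΩ]
  exact Finset.sum_pos' (fun y _ => hnn z y) ⟨y, hy, hzy⟩

lemma weight_eq_zero_of_notMem_clos (hsym : ∀ x y, μ x y = μ y x) (hnn : ∀ x y, 0 ≤ μ x y)
    {x y : V} (hx : x ∈ Ω) (hy : y ∉ clos μ Ω) : μ x y = 0 := by
  refine ((hnn x y).lt_or_eq.resolve_left fun hxy => hy ?_).symm
  have hyΩ : y ∉ Ω := fun hyΩ => hy (Finset.mem_union_left _ hyΩ)
  exact Finset.mem_union_right _ ((mem_bdry μ Ω).mpr ⟨hyΩ, x, hx, hsym x y ▸ hxy⟩)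

lemma edgeSum_add (F G : V → V → ℝ) :
    edgeSum μ Ω (fun x y => F x y + G x y) = edgeSum μ Ω F + edgeSum μ Ω G := by
  simp only [edgeSum, mul_add, Finset.sum_add_distrib]
  ring

lemma edgeSum_const_mul (c : ℝ) (F : V → V → ℝ) :
    edgeSum μ Ω (fun x y => c * F x y) = c * edgeSum μ Ω F := by
  simp only [edgeSum, mul_left_comm _ c, ← Finset.mul_sum]
  ring

lemma edgeSum_mono (hnn : ∀ x y, 0 ≤ μ x y) {F G : V → V → ℝ} (h : ∀ x y, F x y ≤ G x y) :
    edgeSum μ Ω F ≤ edgeSum μ Ω G := by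
  unfold edgeSum
  gcongr with x _ y _ x _ y _ <;> first | exact hnn x y | exact h x y

lemma edgeSum_nonneg (hnn : ∀ x y, 0 ≤ μ x y) {F : V → V → ℝ} (h : ∀ x y, 0 ≤ F x y) :
    0 ≤ edgeSum μ Ω F := by
  simpa [edgeSum] using edgeSum_mono μ Ω hnn h

lemma dirichlet_nonneg (hnn : ∀ x y, 0 ≤ μ x y) (f : V → ℝ) : 0 ≤ dirichlet μ Ω f :=
  edgeSum_nonneg μ Ω hnn fun _ _ => sq_nonneg _

lemma cut_nonneg (hnn : ∀ x y, 0 ≤ μ x y) (A : Finset V) : 0 ≤ cut μ Ω A :=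
  edgeSum_nonneg μ Ω hnn fun _ _ => by split_ifs <;> norm_num

lemma dirichlet_smul (c : ℝ) (f : V → ℝ) :
    dirichlet μ Ω (c • f) = c ^ 2 * dirichlet μ Ω f := by
  rw [dirichlet, dirichlet, ← edgeSum_const_mul]
  congr 1
  funext x y
  simp only [Pi.smul_apply, smul_eq_mul]
  ring

lemma dirichlet_add_smul (f g : V → ℝ) (t : ℝ) :
    dirichlet μ Ω (f + t • g) =
      dirichlet μ Ω f + 2 * t * dform μ Ω f g + t ^ 2 * dirichlet μ Ω g := by
  simp only [dirichlet, dform]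
  rw [← edgeSum_const_mul, ← edgeSum_const_mul, ← edgeSum_add, ← edgeSum_add]
  congr 1
  funext x y
  simp only [Pi.add_apply, Pi.smul_apply, smul_eq_mul]
  ring

lemma dirichlet_comp_le (hnn : ∀ x y, 0 ≤ μ x y) {φ : ℝ → ℝ} (hφ : LipschitzWith 1 φ)
    (f : V → ℝ) : dirichlet μ Ω (φ ∘ f) ≤ dirichlet μ Ω f :=
  edgeSum_mono μ Ω hnn fun x y => sq_le_sq.mpr <| by
    simpa [Real.dist_eq] using hφ.dist_le_mul (f x) (f y)

lemma continuous_dirichlet : Continuous (dirichlet μ Ω) := by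
  unfold dirichlet edgeSum
  fun_prop

lemma dirichlet_indicator_sub_const (A : Finset V) (c : ℝ) :
    dirichlet μ Ω (fun y => (if y ∈ A then 1 else 0) - c) = cut μ Ω A := by
  unfold dirichlet cut
  congr 1
  funext x y
  rw [sub_sub_sub_cancel_right]
  split_ifs <;> simp_all

end DirichletEnergy

section Harmonic

variable (μ : V → V → ℝ) (Ω : Finset V)

lemma dform_green_formula (hsym : ∀ x y, μ x y = μ y x) (hnn : ∀ x y, 0 ≤ μ x y)
    (f g : V → ℝ) :
    dform μ Ω f g = ∑ x ∈ Ω, g x * ∑ y, μ x y * (f x - f y) +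
      ∑ z ∈ bdry μ Ω, g z * ∑ x ∈ Ω, μ z x * (f z - f x) := by
  have hsplit : ∀ x ∈ Ω, ∑ y, μ x y * (f x - f y) =
      ∑ y ∈ Ω, μ x y * (f x - f y) + ∑ y ∈ bdry μ Ω, μ x y * (f x - f y) := by
    intro x hx
    rw [← Finset.sum_union (disjoint_bdry μ Ω)]
    refine (Finset.sum_subset (Finset.subset_univ _) fun y _ hy => ?_).symm
    rw [weight_eq_zero_of_notMem_clos μ Ω hsym hnn hx hy, zero_mul]
  have hpair : ∀ s t : Finset V, ∑ x ∈ s, ∑ y ∈ t, μ x y * ((f x - f y) * (g x - g y)) =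
      ∑ x ∈ s, g x * ∑ y ∈ t, μ x y * (f x - f y) +
        ∑ y ∈ t, g y * ∑ x ∈ s, μ y x * (f y - f x) := by
    intro s t
    simp only [Finset.mul_sum]
    rw [Finset.sum_comm (s := t) (t := s), ← Finset.sum_add_distrib]
    refine Finset.sum_congr rfl fun x _ => ?_
    rw [← Finset.sum_add_distrib]
    refine Finset.sum_congr rfl fun y _ => ?_
    rw [hsym y x]
    ring
  rw [Finset.sum_congr rfl fun x hx => by rw [hsplit x hx], dform, edgeSum, hpair, hpair]
  simp only [mul_add, Finset.sum_add_distrib]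
  ring

lemma IsHarmonic.const_smul {f : V → ℝ} (hf : IsHarmonic μ Ω f) (c : ℝ) :
    IsHarmonic μ Ω (c • f) := by
  intro x hx
  have hfx := hf x hx
  simp only [lap, Pi.smul_apply, smul_eq_mul, ← mul_sub, mul_left_comm _ c, ← Finset.mul_sum,
    mul_div_assoc] at hfx ⊢
  rw [hfx, mul_zero]

lemma isHarmonic_of_forall_dirichlet_le (hsym : ∀ x y, μ x y = μ y x)
    (hnn : ∀ x y, 0 ≤ μ x y) {w : V → ℝ}
    (hmin : ∀ g : V → ℝ, (∀ z ∈ bdry μ Ω, g z = w z) → dirichlet μ Ω w ≤ dirichlet μ Ω g) :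
    IsHarmonic μ Ω w := by
  intro x hx
  set e : V → ℝ := fun y => if y = x then 1 else 0
  -- `t ↦ D(w + t e)` is minimal at `t = 0`, so its linear coefficient `2 D(w, e)` vanishes.
  have hvar : ∀ t : ℝ, 0 ≤ dirichlet μ Ω e * (t * t) + 2 * dform μ Ω w e * t + 0 := by
    intro t
    have hwt := hmin (w + t • e) fun z hz => by
      have hzx : z ≠ x := by
        rintro rfl
        exact ((mem_bdry μ Ω).mp hz).1 hx
      simp [e, hzx]
    rw [dirichlet_add_smul] at hwt
    linarith
  have hfirst : dform μ Ω w e = 0 := by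
    have := discrim_le_zero hvar
    rw [discrim] at this
    nlinarith
  have hnum : ∑ y, μ x y * (w x - w y) = 0 := by
    have hxb : x ∉ bdry μ Ω := fun h => ((mem_bdry μ Ω).mp h).1 hx
    rw [dform_green_formula μ Ω hsym hnn] at hfirst
    simpa [e, hx, hxb] using hfirst
  have hneg : ∑ y, μ x y * (w y - w x) = -∑ y, μ x y * (w x - w y) := by
    rw [← Finset.sum_neg_distrib]
    exact Finset.sum_congr rfl fun y _ => by ring
  rw [lap, hneg, hnum, neg_zero, zero_div]

lemma exists_isHarmonic_extension (hsym : ∀ x y, μ x y = μ y x) (hnn : ∀ x y, 0 ≤ μ x y)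
    (φ : V → ℝ) :
    ∃ w : V → ℝ, (∀ z ∈ bdry μ Ω, w z = φ z) ∧ IsHarmonic μ Ω w ∧
      dirichlet μ Ω w ≤ dirichlet μ Ω φ := by
  set R := ∑ x, |φ x|
  set clamp : ℝ → ℝ := fun u => max (-R) (min R u)
  have hclamp : LipschitzWith 1 clamp := (LipschitzWith.id.const_min R).const_max (-R)
  have hφR : ∀ x, φ x ∈ Set.Icc (-R) R := fun x =>
    abs_le.mp <| Finset.single_le_sum (f := fun x => |φ x|) (fun _ _ => abs_nonneg _)
      (Finset.mem_univ x)
  set K : Set (V → ℝ) := {g | ∀ z ∈ bdry μ Ω, g z = φ z} ∩ Set.univ.pi fun _ => Set.Icc (-R) R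
  have hK : IsCompact K := by
    refine (isCompact_univ_pi fun _ => isCompact_Icc).inter_left ?_
    simp only [Set.ofPred_forall]
    exact isClosed_iInter fun z => isClosed_iInter fun _ =>
      isClosed_eq (continuous_apply z) continuous_const
  have hφK : φ ∈ K := ⟨fun _ _ => rfl, fun x _ => hφR x⟩
  obtain ⟨w, ⟨hwφ, -⟩, hwmin⟩ :=
    hK.exists_isMinOn ⟨φ, hφK⟩ (continuous_dirichlet μ Ω).continuousOn
  have hclampK : ∀ g : V → ℝ, (∀ z ∈ bdry μ Ω, g z = w z) → clamp ∘ g ∈ K := by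
    refine fun g hg => ⟨fun z hz => ?_, fun x _ => ⟨le_max_left _ _, max_le ?_ (min_le_left _ _)⟩⟩
    · simp only [Function.comp_apply, hg z hz, hwφ z hz, clamp]
      rw [min_eq_right (hφR z).2, max_eq_right (hφR z).1]
    · linarith [(hφR x).1, (hφR x).2]
  refine ⟨w, hwφ, isHarmonic_of_forall_dirichlet_le μ Ω hsym hnn fun g hg => ?_, hwmin hφK⟩
  exact (hwmin (hclampK g hg)).trans (dirichlet_comp_le μ Ω hnn hclamp g)

end Harmonic

section Cheeger

variable (μ : V → V → ℝ) (Ω : Finset V)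

lemma lambda1_le_dirichlet_div (hnn : ∀ x y, 0 ≤ μ x y) {u : V → ℝ} (hu : IsHarmonic μ Ω u)
    (hmean : ∑ x ∈ bdry μ Ω, u x * vm μ Ω x = 0)
    (hnorm : 0 < ∑ x ∈ bdry μ Ω, u x ^ 2 * vm μ Ω x) :
    lambda1 μ Ω ≤ dirichlet μ Ω u / ∑ x ∈ bdry μ Ω, u x ^ 2 * vm μ Ω x := by
  set N := ∑ x ∈ bdry μ Ω, u x ^ 2 * vm μ Ω x
  set s := (Real.sqrt N)⁻¹
  have hs : s ^ 2 = N⁻¹ := by rw [inv_pow, Real.sq_sqrt hnorm.le]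
  have hbdd : BddBelow {r : ℝ | ∃ v : V → ℝ, IsHarmonic μ Ω v ∧
      ∑ x ∈ bdry μ Ω, v x ^ 2 * vm μ Ω x = 1 ∧ ∑ x ∈ bdry μ Ω, v x * vm μ Ω x = 0 ∧
      r = dirichlet μ Ω v} := ⟨0, by
    rintro r ⟨v, -, -, -, rfl⟩
    exact dirichlet_nonneg μ Ω hnn v⟩
  refine (csInf_le hbdd ⟨s • u, hu.const_smul μ Ω s, ?_, ?_, rfl⟩).trans_eq ?_
  · simp only [Pi.smul_apply, smul_eq_mul, mul_pow, mul_assoc, ← Finset.mul_sum, hs]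
    exact inv_mul_cancel₀ hnorm.ne'
  · simp only [Pi.smul_apply, smul_eq_mul, mul_assoc, ← Finset.mul_sum, hmean, mul_zero]
  · rw [dirichlet_smul, hs, inv_mul_eq_div]

lemma lambda1_le_two_mul_cut_div (hsym : ∀ x y, μ x y = μ y x) (hnn : ∀ x y, 0 ≤ μ x y)
    {A : Finset V} (hpos : 0 < msum μ Ω (A ∩ bdry μ Ω))
    (hhalf : msum μ Ω (A ∩ bdry μ Ω) ≤ msum μ Ω (bdry μ Ω) / 2) :
    lambda1 μ Ω ≤ 2 * (cut μ Ω A / msum μ Ω (A ∩ bdry μ Ω)) := by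
  set a := msum μ Ω (A ∩ bdry μ Ω)
  set M := msum μ Ω (bdry μ Ω)
  set c := a / M
  have hcM : c * M = a := div_mul_cancel₀ a (by linarith)
  have hc : c ≤ 1 / 2 := by
    rw [div_le_iff₀ (by linarith)]
    linarith
  set φ : V → ℝ := fun y => (if y ∈ A then 1 else 0) - c
  obtain ⟨w, hwφ, hw, hwD⟩ := exists_isHarmonic_extension μ Ω hsym hnn φ
  have hindicator : ∑ x ∈ bdry μ Ω, (if x ∈ A then 1 else 0) * vm μ Ω x = a := by
    simp only [ite_mul, one_mul, zero_mul, Finset.sum_ite_mem, Finset.inter_comm, a, msum]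
  have hmean : ∑ x ∈ bdry μ Ω, w x * vm μ Ω x = 0 :=
    calc ∑ x ∈ bdry μ Ω, w x * vm μ Ω x = ∑ x ∈ bdry μ Ω, φ x * vm μ Ω x :=
          Finset.sum_congr rfl fun x hx => by rw [hwφ x hx]
      _ = a - c * M := by
          simp only [φ, sub_mul, Finset.sum_sub_distrib, hindicator, ← Finset.mul_sum]
          rfl
      _ = 0 := by rw [hcM, sub_self]
  have hnorm : ∑ x ∈ bdry μ Ω, w x ^ 2 * vm μ Ω x = a * (1 - c) :=
    calc ∑ x ∈ bdry μ Ω, w x ^ 2 * vm μ Ω x = ∑ x ∈ bdry μ Ω, φ x ^ 2 * vm μ Ω x :=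
          Finset.sum_congr rfl fun x hx => by rw [hwφ x hx]
      _ = ∑ x ∈ bdry μ Ω, ((1 - 2 * c) * ((if x ∈ A then 1 else 0) * vm μ Ω x) +
            c ^ 2 * vm μ Ω x) :=
          Finset.sum_congr rfl fun x _ => by simp only [φ]; split_ifs <;> ring
      _ = (1 - 2 * c) * a + c ^ 2 * M := by
          rw [Finset.sum_add_distrib, ← Finset.mul_sum, ← Finset.mul_sum, hindicator]
          rfl
      _ = a * (1 - c) := by linear_combination c * hcM
  have hnorm_pos : 0 < a * (1 - c) := mul_pos hpos (by linarith)
  calc lambda1 μ Ω ≤ dirichlet μ Ω w / (a * (1 - c)) :=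
        hnorm ▸ lambda1_le_dirichlet_div μ Ω hnn hw hmean (hnorm ▸ hnorm_pos)
    _ ≤ cut μ Ω A / (a / 2) := by
        rw [← dirichlet_indicator_sub_const μ Ω A c]
        gcongr
        · exact dirichlet_nonneg μ Ω hnn _
        · nlinarith
    _ = 2 * (cut μ Ω A / a) := by ring

lemma exists_cheeger_admissible (hnn : ∀ x y, 0 ≤ μ x y) (hcard : 2 ≤ (bdry μ Ω).card) :
    ∃ A ⊆ clos μ Ω, 0 < msum μ Ω (A ∩ bdry μ Ω) ∧
      msum μ Ω (A ∩ bdry μ Ω) ≤ msum μ Ω (bdry μ Ω) / 2 := by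
  obtain ⟨z, hz, hzmin⟩ :=
    Finset.exists_min_image (bdry μ Ω) (vm μ Ω) (Finset.card_pos.mp (by omega))
  obtain ⟨z', hz', hzz'⟩ := Finset.exists_mem_ne (by omega : 1 < (bdry μ Ω).card) z
  have hpair : vm μ Ω z' + vm μ Ω z ≤ msum μ Ω (bdry μ Ω) := by
    rw [← Finset.sum_pair hzz', msum]
    refine Finset.sum_le_sum_of_subset_of_nonneg ?_ fun x _ _ => vm_nonneg μ Ω hnn x
    exact Finset.insert_subset hz' (Finset.singleton_subset_iff.mpr hz)
  refine ⟨{z}, Finset.singleton_subset_iff.mpr (Finset.mem_union_right _ hz), ?_⟩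
  rw [Finset.singleton_inter_of_mem hz, msum, Finset.sum_singleton]
  exact ⟨vm_pos_of_mem_bdry μ Ω hnn hz, by linarith [hzmin z' hz']⟩

end Cheeger

theorem stmt_16_general (μ : V → V → ℝ) (Ω : Finset V)
    (hsym : ∀ x y, μ x y = μ y x) (hnn : ∀ x y, 0 ≤ μ x y)
    (hcard : 2 ≤ (bdry μ Ω).card) :
    lambda1 μ Ω ≤ 2 * hE μ Ω := by
  obtain ⟨A, hA, hpos, hhalf⟩ := exists_cheeger_admissible μ Ω hnn hcard
  have h : lambda1 μ Ω / 2 ≤ hE μ Ω := by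
    refine le_csInf ⟨_, A, hA, hpos, hhalf, rfl⟩ ?_
    rintro r ⟨B, -, hBpos, hBhalf, rfl⟩
    linarith [lambda1_le_two_mul_cut_div μ Ω hsym hnn hBpos hBhalf]
  linarith

/-- Proposition 4.6: λ₁(Ω) ≤ 2 h_E(Ω̃). -/
theorem stmt_16 (μ : V → V → ℝ) (Ω : Finset V)
    (hsym : ∀ x y, μ x y = μ y x) (hnn : ∀ x y, 0 ≤ μ x y)
    (hconn : TilConnected μ Ω) (hcard : 2 ≤ (bdry μ Ω).card) :
    lambda1 μ Ω ≤ 2 * hE μ Ω :=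
  stmt_16_general μ Ω hsym hnn hcard
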